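/- arXiv:0901.2503 — 2 statements merged into one kernel-verified Lean document; each statement's English description precedes it below -/
import Mathlib

section
/- Let (ε_k)_{k∈ℤ} be a strong H-white noise and let (a_j)_{j∈ℕ} be bounded linear operators on H with Σ_{j=0}^∞ ‖a_j‖_∞ < ∞. Let X_k = Σ_{j=0}^∞ a_j(ε_{k−j}) and S_n = Σ_{k=1}^n X_k. Then the series Σ_{k=−∞}^{+∞} E⟨X_0, X_k⟩ converges absolutely and n · E‖S_n/n‖² → Σ_{k=−∞}^{+∞} E⟨X_0, X_k⟩ as n → ∞. -/
open MeasureTheory ProbabilityTheory Filter Topology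
open scoped InnerProductSpace

noncomputable section

variable {Ω : Type*} [MeasureSpace Ω] [IsProbabilityMeasure (ℙ : Measure Ω)]
variable {H : Type*} [NormedAddCommGroup H] [InnerProductSpace ℝ H] [CompleteSpace H]
  [SecondCountableTopology H] [MeasurableSpace H] [BorelSpace H]

/-- A strong `H`-white noise: a sequence of i.i.d. centered random elements of `H`
with finite strong second moment. -/
structure IsStrongWhiteNoise (ε : ℤ → Ω → H) : Prop where
  meas : ∀ k, Measurable (ε k)
  indep : iIndepFun ε ℙ
  ident : ∀ k, Measure.map (ε k) ℙ = Measure.map (ε 0) ℙ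
  centered : ∫ ω, ε 0 ω ∂ℙ = 0
  sqInt : MemLp (ε 0) 2 ℙ

/-! In `L²(Ω; H)` the process is `X_k = ∑_{i ∈ ℤ} a_i(ε_{k-i})` with `a_i = 0` for `i < 0`.
Independence and identical distribution make `a_i(ε_p)` and `a_j(ε_q)` orthogonal for `p ≠ q`
and their Gram matrix independent of `p`, so `E⟪X_k, X_l⟫ = c(l - k)` with
`c(d) = ∑_i E⟪a_i(ε_0), a_{i+d}(ε_0)⟫`; Cauchy–Schwarz bounds `|c(d)|` by
`∑_i ‖a_i(ε_0)‖₂ ‖a_{i+d}(ε_0)‖₂`, which is summable in `d`. Finally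
`E‖S_n‖² = ∑_{k,l<n} c(l - k) = ∑_{j<n} ∑_{|d|≤j} c(d)`, so `n E‖S_n/n‖²` is a Cesàro mean of
the symmetric partial sums of `∑_d c(d)`. -/

open Finset

section DoubleSums

variable {M : Type*} [AddCommMonoid M]

theorem sum_Icc_neg_natCast_eq_sum_range (c : ℤ → M) (n : ℕ) :
    ∑ d ∈ Icc (-n : ℤ) n, c d = ∑ m ∈ range (2 * n + 1), c (m - n) :=
  sum_nbij' (fun d => (d + n).toNat) (fun m => (m : ℤ) - n)
    (fun d hd => by simp only [mem_Icc, mem_range] at hd ⊢; omega)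
    (fun m hm => by simp only [mem_Icc, mem_range] at hm ⊢; omega)
    (fun d hd => by rw [mem_Icc] at hd; omega) (fun m _ => by omega)
    (fun d hd => by simp only [mem_Icc] at hd; congr 1; omega)

theorem sum_range_succ_sum_range_succ_sub (c : ℤ → M) (n : ℕ) :
    ∑ k ∈ range (n + 1), ∑ l ∈ range (n + 1), c (l - k)
      = ∑ k ∈ range n, ∑ l ∈ range n, c (l - k) + ∑ d ∈ Icc (-n : ℤ) n, c d := by
  have hreflect : ∑ k ∈ range (n + 1), c (n - k) = ∑ k ∈ range (n + 1), c k := by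
    rw [← sum_range_reflect (fun k : ℕ => c k)]
    exact sum_congr rfl fun k hk => by rw [mem_range] at hk; congr 1; omega
  have hsplit : ∑ m ∈ range (2 * n + 1), c (m - n)
      = ∑ l ∈ range n, c (l - n) + ∑ k ∈ range (n + 1), c k := by
    rw [show 2 * n + 1 = n + (n + 1) by ring, sum_range_add]
    simp only [Nat.cast_add, add_sub_cancel_left]
  rw [sum_Icc_neg_natCast_eq_sum_range, hsplit, ← hreflect]
  simp only [sum_range_succ _ n, sum_add_distrib]
  abel

theorem sum_range_sum_range_sub_eq_sum_range_sum_Icc (c : ℤ → M) (n : ℕ) :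
    ∑ k ∈ range n, ∑ l ∈ range n, c (l - k) = ∑ j ∈ range n, ∑ d ∈ Icc (-j : ℤ) j, c d := by
  induction n with
  | zero => simp
  | succ n ih => rw [sum_range_succ_sum_range_succ_sub, ih, sum_range_succ]

end DoubleSums

theorem HasSum.tendsto_inv_smul_sum_range_sum_range_sub {F : Type*} [NormedAddCommGroup F]
    [NormedSpace ℝ F] {c : ℤ → F} {s : F} (h : HasSum c s) :
    Tendsto (fun n : ℕ => (n : ℝ)⁻¹ • ∑ k ∈ range n, ∑ l ∈ range n, c (l - k)) atTop (𝓝 s) := by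
  simp_rw [sum_range_sum_range_sub_eq_sum_range_sum_Icc]
  exact (h.comp tendsto_Icc_neg).cesaro_smul

section InnerProductSpace

variable {E : Type*} [NormedAddCommGroup E] [InnerProductSpace ℝ E]

theorem tendsto_inv_mul_norm_sum_range_sq_of_inner_eq {Y : ℕ → E} {c : ℤ → ℝ} {s : ℝ}
    (hc : HasSum c s) (hY : ∀ k l : ℕ, ⟪Y k, Y l⟫_ℝ = c (l - k)) :
    Tendsto (fun n : ℕ => (n : ℝ)⁻¹ * ‖∑ k ∈ range n, Y k‖ ^ 2) atTop (𝓝 s) := by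
  have hnorm (n : ℕ) : ‖∑ k ∈ range n, Y k‖ ^ 2 = ∑ k ∈ range n, ∑ l ∈ range n, c (l - k) := by
    rw [← real_inner_self_eq_norm_sq, sum_inner]
    simp only [inner_sum, hY]
  simpa only [hnorm, smul_eq_mul] using hc.tendsto_inv_smul_sum_range_sum_range_sub

theorem summable_prod_mul_comp_add {G : Type*} [AddGroup G] {w : G → ℝ} (hw0 : 0 ≤ w)
    (hw : Summable w) : Summable fun p : G × G => w p.2 * w (p.2 + p.1) := by
  have hshear : Function.Injective fun p : G × G => (p.2, p.2 + p.1) := by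
    intro p q hpq
    simp only [Prod.mk.injEq] at hpq
    obtain ⟨h2, h21⟩ := hpq
    rw [h2] at h21
    exact Prod.ext (add_left_cancel h21) h2
  exact (hw.mul_of_nonneg hw hw0 hw0).comp_injective hshear

theorem summable_abs_tsum_inner_add {G : Type*} [AddGroup G] {v : G → E}
    (hv : Summable fun i => ‖v i‖) : Summable fun d => |∑' i, ⟪v i, v (i + d)⟫_ℝ| := by
  have hw := summable_prod_mul_comp_add (fun i => norm_nonneg (v i)) hv
  refine hw.prod.of_nonneg_of_le (fun d => abs_nonneg _) fun d => ?_
  rw [← Real.norm_eq_abs]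
  exact tsum_of_norm_bounded (hw.prod_factor d).hasSum fun i => norm_inner_le_norm _ _

end InnerProductSpace

theorem summable_norm_extend {ι κ β : Type*} [NormedAddCommGroup β] {g : ι → κ}
    (hg : Function.Injective g) {f : ι → β} (hf : Summable fun i => ‖f i‖) :
    Summable fun k => ‖Function.extend g f 0 k‖ :=
  ((summable_extend_zero hg).mpr hf).congr fun k => by
    rw [Function.apply_extend norm, show norm ∘ (0 : κ → β) = 0 from funext fun _ => norm_zero]
    rfl

section MovingAverage

-- `u p i` plays the role of `a_i (ε_p)`.

variable {G E : Type*} [AddCommGroup G] [NormedAddCommGroup E] [InnerProductSpace ℝ E]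
  [CompleteSpace E] {u : G → G → E}

theorem summable_antidiag (hstat : ∀ p i j, ⟪u p i, u p j⟫_ℝ = ⟪u 0 i, u 0 j⟫_ℝ)
    (hsum : Summable fun i => ‖u 0 i‖) (k : G) : Summable fun i => u (k - i) i := by
  refine .of_norm (hsum.congr fun i => ?_)
  have h := hstat (k - i) i i
  rw [real_inner_self_eq_norm_sq, real_inner_self_eq_norm_sq] at h
  exact (sq_eq_sq₀ (norm_nonneg _) (norm_nonneg _)).mp h.symm

theorem inner_tsum_antidiag (horth : ∀ p q i j, p ≠ q → ⟪u p i, u q j⟫_ℝ = 0)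
    (hstat : ∀ p i j, ⟪u p i, u p j⟫_ℝ = ⟪u 0 i, u 0 j⟫_ℝ) (hsum : Summable fun i => ‖u 0 i‖)
    (k l : G) :
    ⟪∑' i, u (k - i) i, ∑' j, u (l - j) j⟫_ℝ = ∑' i, ⟪u 0 i, u 0 (i + (l - k))⟫_ℝ := by
  set Yl := ∑' j, u (l - j) j
  have hterm (i : G) : ⟪u (k - i) i, Yl⟫_ℝ = ⟪u 0 i, u 0 (i + (l - k))⟫_ℝ := by
    have h : HasSum (fun j => ⟪u (k - i) i, u (l - j) j⟫_ℝ) ⟪u (k - i) i, Yl⟫_ℝ :=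
      (summable_antidiag hstat hsum l).hasSum.mapL (innerSL ℝ (u (k - i) i))
    have hoff (j : G) (hj : j ≠ i + (l - k)) : ⟪u (k - i) i, u (l - j) j⟫_ℝ = 0 := by
      refine horth _ _ _ _ fun hkl => hj ?_
      rw [show j = l - (l - j) by abel, ← hkl]
      abel
    rw [← h.tsum_eq, tsum_eq_single (i + (l - k)) hoff,
      show l - (i + (l - k)) = k - i by abel, hstat]
  have h : HasSum (fun i => ⟪Yl, u (k - i) i⟫_ℝ) ⟪Yl, ∑' i, u (k - i) i⟫_ℝ :=
    (summable_antidiag hstat hsum k).hasSum.mapL (innerSL ℝ Yl)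
  simp only [real_inner_comm _ Yl, hterm] at h
  exact h.tsum_eq.symm

end MovingAverage

section LTwo

variable {α E : Type*} [MeasurableSpace α] {μ : Measure α}

theorem ae_eq_of_tendsto_Lp_of_tendsto_ae [IsFiniteMeasure μ] [NormedAddCommGroup E]
    {p : ENNReal} [Fact (1 ≤ p)] {F : ℕ → Lp E p μ} {G : Lp E p μ} {f : ℕ → α → E} {g : α → E}
    (hF : Tendsto F atTop (𝓝 G)) (hFf : ∀ n, F n =ᵐ[μ] f n)
    (hf : ∀ᵐ x ∂μ, Tendsto (fun n => f n x) atTop (𝓝 (g x))) : G =ᵐ[μ] g :=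
  tendstoInMeasure_ae_unique ((tendstoInMeasure_of_tendsto_Lp hF).congr_left hFf)
    (tendstoInMeasure_of_tendsto_ae (fun n => (Lp.aestronglyMeasurable (F n)).congr (hFf n)) hf)

theorem inner_eq_integral_inner_of_ae_eq [NormedAddCommGroup E] [InnerProductSpace ℝ E]
    {F G : Lp E 2 μ} {f g : α → E} (hf : F =ᵐ[μ] f) (hg : G =ᵐ[μ] g) :
    ⟪F, G⟫_ℝ = ∫ x, ⟪f x, g x⟫_ℝ ∂μ := by
  rw [L2.inner_def]
  exact integral_congr_ae (by filter_upwards [hf, hg] with x hfx hgx; rw [hfx, hgx])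

theorem norm_sq_eq_integral_norm_sq_of_ae_eq [NormedAddCommGroup E] [InnerProductSpace ℝ E]
    {F : Lp E 2 μ} {f : α → E} (hf : F =ᵐ[μ] f) : ‖F‖ ^ 2 = ∫ x, ‖f x‖ ^ 2 ∂μ := by
  rw [← real_inner_self_eq_norm_sq, inner_eq_integral_inner_of_ae_eq hf hf]
  simp only [real_inner_self_eq_norm_sq]

theorem Lp.coeFn_finsetSum_of_ae_eq [NormedAddCommGroup E] {p : ENNReal} {ι : Type*}
    {F : ι → Lp E p μ} {f : ι → α → E} (hF : ∀ i, F i =ᵐ[μ] f i) (s : Finset ι) :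
    ⇑(∑ i ∈ s, F i) =ᵐ[μ] fun x => ∑ i ∈ s, f i x := by
  filter_upwards [Lp.coeFn_fun_finsetSum s F, (eventually_all_finset s).2 fun i _ => hF i]
    with x hsum hterm
  rw [hsum]
  exact sum_congr rfl hterm

theorem mul_integral_norm_inv_smul_sq [NormedAddCommGroup E] [NormedSpace ℝ E] (r : ℝ)
    (f : α → E) : r * ∫ x, ‖r⁻¹ • f x‖ ^ 2 ∂μ = r⁻¹ * ∫ x, ‖f x‖ ^ 2 ∂μ := by
  simp only [norm_smul, norm_inv, Real.norm_eq_abs, inv_pow, sq_abs, mul_pow,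
    integral_const_mul, ← mul_assoc]
  congr 1
  rcases eq_or_ne r 0 with rfl | hr
  · simp
  · field_simp

end LTwo

namespace IsStrongWhiteNoise

variable {Ω' : Type*} [MeasureSpace Ω'] {E : Type*} [NormedAddCommGroup E]
  [InnerProductSpace ℝ E] [MeasurableSpace E] {ε : ℤ → Ω' → E}

theorem identDistrib (hε : IsStrongWhiteNoise ε) (k : ℤ) : IdentDistrib (ε k) (ε 0) ℙ ℙ :=
  ⟨(hε.meas k).aemeasurable, (hε.meas 0).aemeasurable, hε.ident k⟩

theorem memLp [BorelSpace E] (hε : IsStrongWhiteNoise ε) (k : ℤ) : MemLp (ε k) 2 ℙ :=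
  (hε.identDistrib k).memLp_iff.mpr hε.sqInt

theorem integral_eq_zero [BorelSpace E] (hε : IsStrongWhiteNoise ε) (k : ℤ) :
    ∫ ω, ε k ω ∂ℙ = 0 :=
  (hε.identDistrib k).integral_eq.trans hε.centered

variable [BorelSpace E]

def compLp (hε : IsStrongWhiteNoise ε) (T : E →L[ℝ] E) (p : ℤ) : Lp E 2 (ℙ : Measure Ω') :=
  T.compLp ((hε.memLp p).toLp (ε p))

theorem coeFn_compLp (hε : IsStrongWhiteNoise ε) (T : E →L[ℝ] E) (p : ℤ) :
    hε.compLp T p =ᵐ[ℙ] fun ω => T (ε p ω) := by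
  filter_upwards [T.coeFn_compLp ((hε.memLp p).toLp (ε p)), (hε.memLp p).coeFn_toLp]
    with ω h1 h2
  rw [compLp, h1, h2]

theorem compLp_zero (hε : IsStrongWhiteNoise ε) (p : ℤ) : hε.compLp 0 p = 0 :=
  Lp.ext <| (hε.coeFn_compLp 0 p).trans (Lp.coeFn_zero E 2 ℙ).symm

theorem summable_norm_compLp {ι : Type*} (hε : IsStrongWhiteNoise ε) {A : ι → E →L[ℝ] E}
    (hA : Summable fun i => ‖A i‖) (p : ℤ) : Summable fun i => ‖hε.compLp (A i) p‖ :=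
  (hA.mul_right _).of_nonneg_of_le (fun _ => norm_nonneg _) fun i => (A i).norm_compLp_le _

theorem inner_compLp (hε : IsStrongWhiteNoise ε) (S T : E →L[ℝ] E) (p q : ℤ) :
    ⟪hε.compLp S p, hε.compLp T q⟫_ℝ = ∫ ω, ⟪S (ε p ω), T (ε q ω)⟫_ℝ ∂ℙ :=
  inner_eq_integral_inner_of_ae_eq (hε.coeFn_compLp S p) (hε.coeFn_compLp T q)

theorem inner_compLp_of_ne [CompleteSpace E] [IsFiniteMeasure (ℙ : Measure Ω')]
    (hε : IsStrongWhiteNoise ε) (S T : E →L[ℝ] E) {p q : ℤ} (hpq : p ≠ q) :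
    ⟪hε.compLp S p, hε.compLp T q⟫_ℝ = 0 := by
  have hint (R : E →L[ℝ] E) (r : ℤ) : Integrable (fun ω => R (ε r ω)) ℙ :=
    (R.comp_memLp' (hε.memLp r)).integrable one_le_two
  have hind : IndepFun (fun ω => S (ε p ω)) (fun ω => T (ε q ω)) ℙ :=
    (hε.indep.indepFun hpq).comp S.measurable T.measurable
  have hfactor : ∫ ω, ⟪S (ε p ω), T (ε q ω)⟫_ℝ ∂ℙ
      = ⟪∫ ω, S (ε p ω) ∂ℙ, ∫ ω, T (ε q ω) ∂ℙ⟫_ℝ :=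
    hind.integral_bilin (hint S p) (hint T q) (innerSL ℝ)
  rw [inner_compLp, hfactor, S.integral_comp_comm ((hε.memLp p).integrable one_le_two),
    hε.integral_eq_zero, map_zero, inner_zero_left]

theorem inner_compLp_self (hε : IsStrongWhiteNoise ε) (S T : E →L[ℝ] E) (p : ℤ) :
    ⟪hε.compLp S p, hε.compLp T p⟫_ℝ = ⟪hε.compLp S 0, hε.compLp T 0⟫_ℝ := by
  rw [inner_compLp, inner_compLp]
  exact ((hε.identDistrib p).comp (S.continuous.inner T.continuous).measurable).integral_eq

/-- `a_i (ε_p)` in `L²`, where `a_i := 0` for `i < 0`. -/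
def coeffLp (hε : IsStrongWhiteNoise ε) (a : ℕ → E →L[ℝ] E) (p i : ℤ) :
    Lp E 2 (ℙ : Measure Ω') :=
  hε.compLp (Function.extend ((↑) : ℕ → ℤ) a 0 i) p

def linearProcessLp (hε : IsStrongWhiteNoise ε) (a : ℕ → E →L[ℝ] E) (k : ℤ) :
    Lp E 2 (ℙ : Measure Ω') :=
  ∑' i, hε.coeffLp a (k - i) i

def autocovariance (hε : IsStrongWhiteNoise ε) (a : ℕ → E →L[ℝ] E) (d : ℤ) : ℝ :=
  ∑' i, ⟪hε.coeffLp a 0 i, hε.coeffLp a 0 (i + d)⟫_ℝ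

variable {a : ℕ → E →L[ℝ] E}

theorem summable_norm_coeffLp (hε : IsStrongWhiteNoise ε) (ha : Summable fun j => ‖a j‖) :
    Summable fun i => ‖hε.coeffLp a 0 i‖ :=
  hε.summable_norm_compLp (summable_norm_extend Nat.cast_injective ha) 0

theorem linearProcessLp_ae_eq [CompleteSpace E] [IsFiniteMeasure (ℙ : Measure Ω')]
    (hε : IsStrongWhiteNoise ε) (ha : Summable fun j => ‖a j‖) {X : Ω' → E} {k : ℤ}
    (hX : ∀ᵐ ω ∂ℙ, Tendsto (fun m : ℕ => ∑ j ∈ range (m + 1), a j (ε (k - j) ω))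
      atTop (𝓝 (X ω))) :
    hε.linearProcessLp a k =ᵐ[ℙ] X := by
  have hvanish : ∀ i ∉ Set.range ((↑) : ℕ → ℤ), hε.coeffLp a (k - i) i = 0 := fun i hi => by
    rw [coeffLp, Function.extend_apply' _ _ _ hi, Pi.zero_apply, compLp_zero]
  have hsum : HasSum (fun j : ℕ => hε.compLp (a j) (k - j)) (hε.linearProcessLp a k) := by
    have h := (Nat.cast_injective.hasSum_iff hvanish).mpr
      (summable_antidiag (u := hε.coeffLp a) (fun p _ _ => hε.inner_compLp_self _ _ p)
        (hε.summable_norm_coeffLp ha) k).hasSum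
    simpa only [Function.comp_def, linearProcessLp, coeffLp, Nat.cast_injective.extend_apply]
      using h
  refine ae_eq_of_tendsto_Lp_of_tendsto_ae (hsum.tendsto_sum_nat.comp (tendsto_add_atTop_nat 1))
    (fun m => Lp.coeFn_finsetSum_of_ae_eq (fun j => hε.coeFn_compLp (a j) (k - j)) _) hX

theorem inner_linearProcessLp [CompleteSpace E] [IsFiniteMeasure (ℙ : Measure Ω')]
    (hε : IsStrongWhiteNoise ε) (ha : Summable fun j => ‖a j‖) (k l : ℤ) :
    ⟪hε.linearProcessLp a k, hε.linearProcessLp a l⟫_ℝ = hε.autocovariance a (l - k) :=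
  inner_tsum_antidiag (u := hε.coeffLp a) (fun _ _ _ _ => hε.inner_compLp_of_ne _ _)
    (fun p _ _ => hε.inner_compLp_self _ _ p) (hε.summable_norm_coeffLp ha) k l

theorem summable_abs_autocovariance (hε : IsStrongWhiteNoise ε)
    (ha : Summable fun j => ‖a j‖) : Summable fun d => |hε.autocovariance a d| :=
  summable_abs_tsum_inner_add (hε.summable_norm_coeffLp ha)

end IsStrongWhiteNoise

theorem linear_process_mean_quadratic_rate_general
    (ε : ℤ → Ω → H) (hε : IsStrongWhiteNoise ε)
    (a : ℕ → H →L[ℝ] H) (ha : Summable fun j : ℕ => ‖a j‖)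
    (X : ℤ → Ω → H)
    (hX : ∀ k : ℤ, ∀ᵐ ω ∂ℙ,
      Tendsto (fun m : ℕ => ∑ j ∈ Finset.range (m + 1), a j (ε (k - j) ω))
        atTop (𝓝 (X k ω))) :
    (Summable fun k : ℤ => |∫ ω, ⟪X 0 ω, X k ω⟫_ℝ ∂ℙ|) ∧
    Tendsto
      (fun n : ℕ =>
        (n : ℝ) * ∫ ω, ‖(n : ℝ)⁻¹ • ∑ k ∈ Finset.range n, X (k + 1) ω‖ ^ 2 ∂ℙ)
      atTop (𝓝 (∑' k : ℤ, ∫ ω, ⟪X 0 ω, X k ω⟫_ℝ ∂ℙ)) := by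
  have hYX (k : ℤ) : hε.linearProcessLp a k =ᵐ[ℙ] X k := hε.linearProcessLp_ae_eq ha (hX k)
  have hcov (k l : ℤ) : ∫ ω, ⟪X k ω, X l ω⟫_ℝ ∂ℙ = hε.autocovariance a (l - k) := by
    rw [← inner_eq_integral_inner_of_ae_eq (hYX k) (hYX l), hε.inner_linearProcessLp ha]
  have hnorm (n : ℕ) :
      (n : ℝ) * ∫ ω, ‖(n : ℝ)⁻¹ • ∑ k ∈ range n, X (k + 1) ω‖ ^ 2 ∂ℙ
        = (n : ℝ)⁻¹ * ‖∑ k ∈ range n, hε.linearProcessLp a (k + 1)‖ ^ 2 := by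
    rw [mul_integral_norm_inv_smul_sq,
      norm_sq_eq_integral_norm_sq_of_ae_eq (Lp.coeFn_finsetSum_of_ae_eq (fun k => hYX _) _)]
  have hc := hε.summable_abs_autocovariance ha
  simp only [hcov, sub_zero, hnorm]
  refine ⟨hc, tendsto_inv_mul_norm_sum_range_sq_of_inner_eq hc.of_abs.hasSum fun k l => ?_⟩
  rw [hε.inner_linearProcessLp ha]
  congr 1
  ring

/-- under `Σ ‖a_j‖ < ∞`, the series `Σ_k E⟪X_0, X_k⟫` converges absolutely and
`n E‖S_n/n‖² → Σ_{k=-∞}^{∞} E⟪X_0, X_k⟫`. -/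
theorem linear_process_mean_quadratic_rate
    (ε : ℤ → Ω → H) (hε : IsStrongWhiteNoise ε)
    (a : ℕ → H →L[ℝ] H) (ha : Summable fun j : ℕ => ‖a j‖)
    (X : ℤ → Ω → H) (hXmeas : ∀ k, Measurable (X k))
    (hX : ∀ k : ℤ, ∀ᵐ ω ∂ℙ,
      Tendsto (fun m : ℕ => ∑ j ∈ Finset.range (m + 1), a j (ε (k - j) ω))
        atTop (𝓝 (X k ω))) :
    (Summable fun k : ℤ => |∫ ω, ⟪X 0 ω, X k ω⟫_ℝ ∂ℙ|) ∧
    Tendsto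
      (fun n : ℕ =>
        (n : ℝ) * ∫ ω, ‖(n : ℝ)⁻¹ • ∑ k ∈ Finset.range n, X (k + 1) ω‖ ^ 2 ∂ℙ)
      atTop (𝓝 (∑' k : ℤ, ∫ ω, ⟪X 0 ω, X k ω⟫_ℝ ∂ℙ)) :=
  linear_process_mean_quadratic_rate_general ε hε a ha X hX
end
end

section
/- Let Γ be a compact, self-adjoint, positive, injective bounded operator on H with orthonormal basis (e_l)_{l∈ℕ} of eigenvectors, Γ e_l = λ_l e_l, λ_l > 0, and let (α_n) be a sequence of positive real numbers decreasing to 0. Then for every x in the range of Γ, the penalized regularized inverse satisfies: for each n the series Σ_{l=0}^∞ (λ_l + α_n)^{-1} ⟨x, e_l⟩ e_l converges in H, and its sum tends to Γ^{-1}x as n → ∞. -/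
open Filter Topology
open scoped InnerProductSpace ENNReal

/-! Since `x = Γ y` and `Γ` is symmetric, `⟪x, e l⟫ = λ_l ⟪e l, y⟫`, so the `n`-th series is the
expansion of `y` with its coordinates multiplied by `λ_l / (λ_l + α_n)`. These multipliers lie
in `[0, 1]` and tend to `1`, so dominated convergence in `ℓ²` together with the isometry
`e.repr : H ≃ ℓ²` gives convergence to `y`. -/

namespace lp

variable {α : Type*} {E : α → Type*} [∀ i, NormedAddCommGroup (E i)] {p : ℝ≥0∞} [Fact (1 ≤ p)]

theorem tendsto_of_tendsto_pi_of_norm_le {β : Type*} {l : Filter β} (hp : 0 < p.toReal)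
    {F : β → lp E p} {f : lp E p} {g : α → ℝ} (hg : Memℓp g p)
    (hFf : ∀ i, Tendsto (fun n => F n i) l (𝓝 (f i)))
    (hFg : ∀ᶠ n in l, ∀ i, ‖F n i‖ ≤ g i) :
    Tendsto F l (𝓝 f) := by
  have hdom : Memℓp (fun i => g i + ‖f i‖) p := hg.add (lp.memℓp f).norm
  have hrpow : Tendsto (fun n => ‖F n - f‖ ^ p.toReal) l (𝓝 0) := by
    simp_rw [lp.norm_rpow_eq_tsum hp, lp.coeFn_sub, Pi.sub_apply]
    simpa [Real.zero_rpow hp.ne'] using tendsto_tsum_of_dominated_convergence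
      (hdom.summable hp) (fun i => ((hFf i).sub_const (f i)).norm.rpow_const (.inr hp.le)) <|
      hFg.mono fun n hn i => by
        rw [Real.norm_of_nonneg (by positivity)]
        gcongr
        calc ‖F n i - f i‖ ≤ ‖F n i‖ + ‖f i‖ := norm_sub_le _ _
          _ ≤ ‖g i + ‖f i‖‖ := (add_le_add_left (hn i) _).trans (Real.le_norm_self _)
  rw [tendsto_iff_norm_sub_tendsto_zero]
  simpa [Real.zero_rpow (inv_pos.2 hp).ne', Real.rpow_rpow_inv (norm_nonneg _) hp.ne'] using
    hrpow.rpow_const (p := p.toReal⁻¹) (.inr (inv_pos.2 hp).le)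

end lp

namespace HilbertBasis

variable {ι 𝕜 E : Type*} [RCLike 𝕜] [NormedAddCommGroup E] [InnerProductSpace 𝕜 E]
  (b : HilbertBasis ι 𝕜 E)

theorem memℓp_mul_repr {m : ι → 𝕜} {C : ℝ} (hm : ∀ i, ‖m i‖ ≤ C) (y : E) :
    Memℓp (fun i => m i * b.repr y i) 2 :=
  ((lp.memℓp (b.repr y)).norm.const_mul C).mono fun i => norm_mul_le_of_le (hm i) le_rfl

theorem hasSum_mul_repr_smul {m : ι → 𝕜} {C : ℝ} (hm : ∀ i, ‖m i‖ ≤ C) (y : E) :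
    HasSum (fun i => (m i * b.repr y i) • b i) (b.repr.symm ⟨_, b.memℓp_mul_repr hm y⟩) :=
  b.hasSum_repr_symm _

theorem tendsto_tsum_mul_repr_smul {β : Type*} {l : Filter β} {m : β → ι → 𝕜} {C : ℝ}
    (hm : ∀ n i, ‖m n i‖ ≤ C) (hm_one : ∀ i, Tendsto (fun n => m n i) l (𝓝 1)) (y : E) :
    Tendsto (fun n => ∑' i, (m n i * b.repr y i) • b i) l (𝓝 y) := by
  simp_rw [fun n => (b.hasSum_mul_repr_smul (hm n) y).tsum_eq]
  conv_rhs => rw [← b.repr.symm_apply_apply y]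
  refine b.repr.symm.continuous.continuousAt.tendsto.comp <|
    lp.tendsto_of_tendsto_pi_of_norm_le (by norm_num) ((lp.memℓp (b.repr y)).norm.const_mul C)
      (fun i => by simpa using (hm_one i).mul_const (b.repr y i)) (.of_forall fun n i => ?_)
  exact norm_mul_le_of_le (hm n i) le_rfl

end HilbertBasis

theorem penalized_regularized_inverse_converges_general
    {H : Type*} [NormedAddCommGroup H] [InnerProductSpace ℝ H]
    (Γ : H →L[ℝ] H)
    (hsa : ∀ x y : H, ⟪Γ x, y⟫_ℝ = ⟪x, Γ y⟫_ℝ)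
    (e : HilbertBasis ℕ ℝ H) (lam : ℕ → ℝ)
    (heig : ∀ l, Γ (e l) = lam l • e l) (hlam : ∀ l, 0 < lam l)
    (α : ℕ → ℝ) (hα : ∀ n, 0 < α n)
    (hα0 : Tendsto α atTop (𝓝 0))
    (x y : H) (hy : Γ y = x) :
    (∀ n : ℕ, Summable fun l : ℕ => ((lam l + α n)⁻¹ * ⟪x, e l⟫_ℝ) • (e l : H)) ∧
    Tendsto (fun n : ℕ => ∑' l : ℕ, ((lam l + α n)⁻¹ * ⟪x, e l⟫_ℝ) • (e l : H))
      atTop (𝓝 y) := by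
  set m : ℕ → ℕ → ℝ := fun n l => lam l / (lam l + α n)
  have hm : ∀ n l, ‖m n l‖ ≤ 1 := fun n l => by
    rw [Real.norm_of_nonneg (div_nonneg (hlam l).le (add_pos (hlam l) (hα n)).le),
      div_le_one (add_pos (hlam l) (hα n))]
    linarith [hα n]
  have hm_one : ∀ l, Tendsto (fun n => m n l) atTop (𝓝 1) := fun l => by
    have h := (tendsto_const_nhds (x := lam l)).div (tendsto_const_nhds.add hα0)
      (by simpa using (hlam l).ne')
    rwa [add_zero, div_self (hlam l).ne'] at h
  have hcoeff : ∀ n l, (lam l + α n)⁻¹ * ⟪x, e l⟫_ℝ = m n l * e.repr y l := fun n l => by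
    rw [e.repr_apply_apply, ← hy, hsa, heig, inner_smul_right, real_inner_comm]
    ring
  simp_rw [hcoeff]
  exact ⟨fun n => (e.hasSum_mul_repr_smul (hm n) y).summable,
    e.tendsto_tsum_mul_repr_smul hm hm_one y⟩

/-- convergence of the penalized regularized inverse: for `x` in the range of
`Γ` with `Γ y = x` and `α_n ↓ 0`, each series `Σ_l (λ_l + α_n)⁻¹ ⟪x, e_l⟫ e_l` converges
in `H` and its sum tends to `y = Γ⁻¹ x`. -/
theorem penalized_regularized_inverse_converges
    {H : Type*} [NormedAddCommGroup H] [InnerProductSpace ℝ H] [CompleteSpace H]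
    (Γ : H →L[ℝ] H) (hcomp : IsCompactOperator Γ)
    (hsa : ∀ x y : H, ⟪Γ x, y⟫_ℝ = ⟪x, Γ y⟫_ℝ)
    (hpos : ∀ x : H, 0 ≤ ⟪Γ x, x⟫_ℝ)
    (hinj : Function.Injective Γ)
    (e : HilbertBasis ℕ ℝ H) (lam : ℕ → ℝ)
    (heig : ∀ l, Γ (e l) = lam l • e l) (hlam : ∀ l, 0 < lam l)
    (α : ℕ → ℝ) (hα : ∀ n, 0 < α n) (hαmono : Antitone α)
    (hα0 : Tendsto α atTop (𝓝 0))
    (x y : H) (hy : Γ y = x) :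
    (∀ n : ℕ, Summable fun l : ℕ => ((lam l + α n)⁻¹ * ⟪x, e l⟫_ℝ) • (e l : H)) ∧
    Tendsto (fun n : ℕ => ∑' l : ℕ, ((lam l + α n)⁻¹ * ⟪x, e l⟫_ℝ) • (e l : H))
      atTop (𝓝 y) :=
  penalized_regularized_inverse_converges_general Γ hsa e lam heig hlam α hα hα0 x y hy
end
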